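/- The closure function for sequence graphs F⇒(Σ) = gfp(F̂_Σ) is idempotent: F⇒(F⇒(Σ)) = F⇒(Σ) for every sequence graph Σ. -/

import Mathlib

inductive V : Type
  | zero | one | X | T
deriving DecidableEq

instance instFintypeV : Fintype V :=
  ⟨{V.zero, V.one, V.X, V.T}, fun x => by cases x <;> simp⟩

def vleB : V → V → Bool := fun a b =>
  a = b || a = V.X || b = V.T

def vlub : V → V → V
  | V.X, b => b
  | a, V.X => a
  | a, b => if a = b then a else V.T

def vglb : V → V → V
  | V.T, b => b
  | a, V.T => a
  | a, b => if a = b then a else V.X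

instance : LE V := ⟨fun a b => vleB a b = true⟩
instance : DecidableRel (α := V) (· ≤ ·) := fun a b => inferInstanceAs (Decidable (vleB a b = true))

instance : Lattice V where
  le := (· ≤ ·)
  le_refl := by decide
  le_trans := by decide
  le_antisymm := by decide
  sup := vlub
  le_sup_left := by decide
  le_sup_right := by decide
  sup_le := by decide
  inf := vglb
  inf_le_left := by decide
  inf_le_right := by decide
  le_inf := by decide

instance : BoundedOrder V where
  top := V.T
  le_top := by decide
  bot := V.X
  bot_le := by decide

def vand : V → V → V
  | V.T, _ => V.T
  | _, V.T => V.T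
  | V.zero, _ => V.zero
  | _, V.zero => V.zero
  | V.one, V.one => V.one
  | _, _ => V.X

def vor : V → V → V
  | V.T, _ => V.T
  | _, V.T => V.T
  | V.one, _ => V.one
  | _, V.one => V.one
  | V.zero, V.zero => V.zero
  | _, _ => V.X

def vnot : V → V
  | V.zero => V.one
  | V.one => V.zero
  | V.X => V.X
  | V.T => V.T


/-- `nextf regIn s` propagates register inputs to register outputs:
a register output `n` with register input `n'` receives `s n'`; all other
nodes receive X. -/
def nextf {Node : Type} (regIn : Node → Option Node) (s : Node → V) : Node → V :=
  fun n => (regIn n).elim V.X s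

/-- The closure function for sequences induced by a closure function `F`:
`F→(σ)(0) = F(σ(0))`, `F→(σ)(t+1) = F(σ(t+1) ⊔ next(F→(σ)(t)))`. -/
def Fseq {Node : Type} (F : (Node → V) → (Node → V)) (regIn : Node → Option Node)
    (σ : ℕ → Node → V) : ℕ → Node → V
  | 0 => F (σ 0)
  | t + 1 => F (σ (t + 1) ⊔ nextf regIn (Fseq F regIn σ t))

/-- The one-step function `F̂_Σ` on sequence graphs of a fixed finite shape:
`F̂_Σ(Δ)(e) = F(Σ(e))` for initial edges `e`, and
`F̂_Σ(Δ)(e) = F(Σ(e) ⊔ ⨅_{i ∈ in(e)} next(Δ(i)))` otherwise. -/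
def Fhat {Node E : Type} [DecidableEq E]
    (F : (Node → V) → (Node → V)) (regIn : Node → Option Node)
    (initial : E → Bool) (ine : E → Finset E)
    (Sg : E → Node → V) (Δ : E → Node → V) : E → Node → V :=
  fun e =>
    if initial e then F (Sg e)
    else F (Sg e ⊔ (ine e).inf fun i => nextf regIn (Δ i))

/-- `x` is the greatest fixpoint of `f`. -/
def IsGfp {α : Type*} [Preorder α] (f : α → α) (x : α) : Prop :=
  f x = x ∧ ∀ y, f y = y → y ≤ x

theorem nextf_mono {Node : Type} (regIn : Node → Option Node) : Monotone (nextf regIn) :=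
  fun _ _ h n => by
    unfold nextf
    cases regIn n with
    | none => exact le_rfl
    | some m => exact h m

/-- `c (c (Σ e ⊔ a) ⊔ b) = c (Σ e ⊔ a ⊔ b)`, and the inputs `a` from `Δ` are absorbed by the
inputs `b ≥ a` from `Δ'`. -/
theorem Fhat_Fhat_of_le {Node E : Type} [DecidableEq E] (c : ClosureOperator (Node → V))
    (regIn : Node → Option Node) (initial : E → Bool) (ine : E → Finset E)
    {Sg Δ Δ' : E → Node → V} (h : Δ ≤ Δ') :
    Fhat c regIn initial ine (Fhat c regIn initial ine Sg Δ) Δ' =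
      Fhat c regIn initial ine Sg Δ' := by
  funext e
  by_cases he : initial e
  · simp only [Fhat, he, if_true, c.idempotent]
  · have hin : ((ine e).inf fun i => nextf regIn (Δ i)) ≤
        (ine e).inf fun i => nextf regIn (Δ' i) :=
      Finset.inf_mono_fun fun i _ => nextf_mono regIn (h i)
    simp only [Fhat, he, Bool.false_eq_true, if_false, c.closure_sup_closure_left, sup_assoc,
      sup_eq_right.mpr hin]

theorem Fsg_idempotent_general {Node E : Type} [DecidableEq E]
    (F : (Node → V) → (Node → V)) (regIn : Node → Option Node)
    (initial : E → Bool) (ine : E → Finset E)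
    (hmono : ∀ s t : Node → V, s ≤ t → F s ≤ F t)
    (hidem : ∀ s : Node → V, F (F s) = F s)
    (hext : ∀ s : Node → V, s ≤ F s)
    (Sg Δ Δ' : E → Node → V)
    (hgfp : IsGfp (Fhat F regIn initial ine Sg) Δ)
    (hgfp' : IsGfp (Fhat F regIn initial ine Δ) Δ') :
    Δ' = Δ := by
  let c : ClosureOperator (Node → V) :=
    .mk' F (fun s t => hmono s t) hext fun s => (hidem s).le
  have hΔ : Fhat c regIn initial ine Sg Δ = Δ := hgfp.1
  have hΔ' : Fhat c regIn initial ine Δ Δ' = Δ' := hgfp'.1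
  have hΔ_fix : Fhat c regIn initial ine Δ Δ = Δ := by
    simpa only [hΔ] using Fhat_Fhat_of_le c regIn initial ine (Sg := Sg) (le_refl Δ)
  have hΔ_le : Δ ≤ Δ' := hgfp'.2 Δ hΔ_fix
  have hΔ'_fix : Fhat c regIn initial ine Sg Δ' = Δ' := by
    rw [← Fhat_Fhat_of_le c regIn initial ine hΔ_le, hΔ, hΔ']
  exact le_antisymm (hgfp.2 Δ' hΔ'_fix) hΔ_le

/-- The closure function for sequence graphs `F⇒(Σ) = gfp(F̂_Σ)` is idempotent:
F⇒(F⇒(Σ)) = F⇒(Σ). -/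
theorem Fsg_idempotent {Node E : Type} [DecidableEq E] [Fintype E]
    (F : (Node → V) → (Node → V)) (regIn : Node → Option Node)
    (initial : E → Bool) (ine : E → Finset E)
    (hmono : ∀ s t : Node → V, s ≤ t → F s ≤ F t)
    (hidem : ∀ s : Node → V, F (F s) = F s)
    (hext : ∀ s : Node → V, s ≤ F s)
    (Sg Δ Δ' : E → Node → V)
    (hgfp : IsGfp (Fhat F regIn initial ine Sg) Δ)
    (hgfp' : IsGfp (Fhat F regIn initial ine Δ) Δ') :
    Δ' = Δ :=
  Fsg_idempotent_general F regIn initial ine hmono hidem hext Sg Δ Δ' hgfp hgfp'
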